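/- Let (X_i)_{i≥1} and (Y_i)_{i≥1} be sequences of i.i.d. real random variables that are almost surely nonzero, and let N, N′ be Poisson random variables with means λ and λ′ respectively, where N is independent of (X_i) and N′ is independent of (Y_i). Then for any n ≥ 1, ‖ℒ(∑_{i=1}^N X_i)^{⊗n} − ℒ(∑_{i=1}^{N′} Y_i)^{⊗n}‖_TV ≤ n (λ ∧ λ′) ‖X₁ − Y₁‖_TV + 1 − e^{−n|λ−λ′|}. -/

import Mathlib

/-!
Both laws are compound Poisson laws `CP(r, F) = ∑ₖ Po(r){k} • F^{*k}`. For a common rate,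
mixing with the same Poisson weights gives
`‖CP(r, F) - CP(r, G)‖ ≤ ∑ₖ Po(r){k} · k ‖F - G‖ = r ‖F - G‖`, and the total variation
distance is subadditive over product measures. For rates `r ≤ s`, termwise
`e^{-(s-r)} Po(r) ≤ Po(s)`, hence `e^{-n(s-r)} CP(r, G)^{⊗n} ≤ CP(s, G)^{⊗n}`, and a
domination `c • P ≤ Q` of probability measures forces `‖P - Q‖ ≤ 1 - c`. The triangle
inequality combines the two bounds.
-/

open MeasureTheory ProbabilityTheory

/-- Total variation distance between two measures. -/
noncomputable def tvDist {α : Type*} [MeasurableSpace α] (P Q : Measure α) : ℝ :=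
  ⨆ s : {s : Set α // MeasurableSet s}, |(P s).toReal - (Q s).toReal|

open scoped ENNReal NNReal

section TotalVariation

variable {α β : Type*} [MeasurableSpace α] [MeasurableSpace β]

lemma tvDist_le_of_forall {P Q : Measure α} {c : ℝ}
    (h : ∀ s, MeasurableSet s → |(P s).toReal - (Q s).toReal| ≤ c) : tvDist P Q ≤ c :=
  ciSup_le fun s => h s s.2

lemma abs_sub_le_tvDist (P Q : Measure α) [IsProbabilityMeasure P] [IsProbabilityMeasure Q]
    {s : Set α} (hs : MeasurableSet s) : |(P s).toReal - (Q s).toReal| ≤ tvDist P Q := by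
  refine le_ciSup (f := fun s : {s : Set α // MeasurableSet s} => |(P s).toReal - (Q s).toReal|)
    ⟨1, ?_⟩ ⟨s, hs⟩
  rintro _ ⟨t, rfl⟩
  exact abs_sub_le_of_nonneg_of_le ENNReal.toReal_nonneg
    (ENNReal.toReal_le_of_le_ofReal zero_le_one (by simpa using prob_le_one))
    ENNReal.toReal_nonneg
    (ENNReal.toReal_le_of_le_ofReal zero_le_one (by simpa using prob_le_one))

lemma tvDist_nonneg (P Q : Measure α) [IsProbabilityMeasure P] [IsProbabilityMeasure Q] :
    0 ≤ tvDist P Q :=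
  (abs_nonneg _).trans (abs_sub_le_tvDist P Q MeasurableSet.empty)

lemma tvDist_comm (P Q : Measure α) : tvDist P Q = tvDist Q P := by
  simp only [tvDist, abs_sub_comm]

lemma tvDist_triangle (P Q R : Measure α) [IsProbabilityMeasure P] [IsProbabilityMeasure Q]
    [IsProbabilityMeasure R] : tvDist P R ≤ tvDist P Q + tvDist Q R :=
  tvDist_le_of_forall fun _ hs =>
    (abs_sub_le _ _ _).trans (add_le_add (abs_sub_le_tvDist P Q hs) (abs_sub_le_tvDist Q R hs))

lemma tvDist_map_le (P Q : Measure α) [IsProbabilityMeasure P] [IsProbabilityMeasure Q]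
    {f : α → β} (hf : Measurable f) : tvDist (P.map f) (Q.map f) ≤ tvDist P Q :=
  tvDist_le_of_forall fun _ hs => by
    rw [Measure.map_apply hf hs, Measure.map_apply hf hs]
    exact abs_sub_le_tvDist P Q (hf hs)

lemma tvDist_le_one_sub_of_smul_le {P Q : Measure α} [IsProbabilityMeasure P]
    [IsProbabilityMeasure Q] {c : ℝ} (hc : 0 ≤ c) (h : ENNReal.ofReal c • P ≤ Q) :
    tvDist P Q ≤ 1 - c := by
  have dominated (t : Set α) : c * P.real t ≤ Q.real t := by
    simpa [measureReal_def, ENNReal.toReal_mul, hc] using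
      ENNReal.toReal_mono (measure_ne_top Q t) (Measure.le_iff'.1 h t)
  have hc1 : c ≤ 1 := by simpa using dominated Set.univ
  refine tvDist_le_of_forall fun s hs => ?_
  rw [← measureReal_def, ← measureReal_def, abs_sub_le_iff]
  constructor
  · nlinarith [dominated s, measureReal_le_one (μ := P) (s := s)]
  · have := dominated sᶜ
    rw [probReal_compl_eq_one_sub hs, probReal_compl_eq_one_sub hs] at this
    nlinarith [dominated s, measureReal_nonneg (μ := P) (s := s)]

end TotalVariation

section Mixture

variable {α β : Type*} [MeasurableSpace α] [MeasurableSpace β]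

lemma abs_toReal_lintegral_sub_le {ν : Measure α} [IsFiniteMeasure ν] {f g : α → ℝ≥0∞}
    (hf : Measurable f) (hg : Measurable g) (hf1 : ∀ a, f a ≤ 1) (hg1 : ∀ a, g a ≤ 1)
    {b : α → ℝ} (hb : Integrable b ν) (hfgb : ∀ a, |(f a).toReal - (g a).toReal| ≤ b a) :
    |(∫⁻ a, f a ∂ν).toReal - (∫⁻ a, g a ∂ν).toReal| ≤ ∫ a, b a ∂ν := by
  have integrable_toReal {h : α → ℝ≥0∞} (hh : Measurable h) (hh1 : ∀ a, h a ≤ 1) :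
      Integrable (fun a => (h a).toReal) ν :=
    .of_bound hh.ennreal_toReal.aestronglyMeasurable 1 <| ae_of_all _ fun a => by
      simpa using ENNReal.toReal_le_of_le_ofReal zero_le_one (by simpa using hh1 a)
  have finite {h : α → ℝ≥0∞} (hh1 : ∀ a, h a ≤ 1) : ∀ᵐ a ∂ν, h a < ∞ :=
    ae_of_all _ fun a => (hh1 a).trans_lt ENNReal.one_lt_top
  rw [← integral_toReal hf.aemeasurable (finite hf1),
    ← integral_toReal hg.aemeasurable (finite hg1),
    ← integral_sub (integrable_toReal hf hf1) (integrable_toReal hg hg1)]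
  exact abs_integral_le_integral_abs.trans <|
    integral_mono ((integrable_toReal hf hf1).sub (integrable_toReal hg hg1)).abs hb hfgb

lemma tvDist_bind_le {ν : Measure α} [IsProbabilityMeasure ν] {κ η : α → Measure β}
    (hκ : Measurable κ) (hη : Measurable η) [∀ a, IsProbabilityMeasure (κ a)]
    [∀ a, IsProbabilityMeasure (η a)] {b : α → ℝ} (hb : Integrable b ν)
    (h : ∀ a, tvDist (κ a) (η a) ≤ b a) :
    tvDist (ν.bind κ) (ν.bind η) ≤ ∫ a, b a ∂ν :=
  tvDist_le_of_forall fun _ hs => by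
    rw [Measure.bind_apply hs hκ.aemeasurable, Measure.bind_apply hs hη.aemeasurable]
    exact abs_toReal_lintegral_sub_le ((Measure.measurable_coe hs).comp hκ)
      ((Measure.measurable_coe hs).comp hη) (fun _ => prob_le_one) (fun _ => prob_le_one) hb
      fun a => (abs_sub_le_tvDist _ _ hs).trans (h a)

lemma tvDist_prod_right_le (P : Measure α) (A B : Measure β) [IsProbabilityMeasure P]
    [IsProbabilityMeasure A] [IsProbabilityMeasure B] :
    tvDist (P.prod A) (P.prod B) ≤ tvDist A B := by
  refine tvDist_le_of_forall fun _ hs => ?_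
  rw [Measure.prod_apply hs, Measure.prod_apply hs]
  simpa using abs_toReal_lintegral_sub_le (ν := P) (measurable_measure_prodMk_left hs)
    (measurable_measure_prodMk_left hs) (fun _ => prob_le_one) (fun _ => prob_le_one)
    (integrable_const (tvDist A B)) fun _ => abs_sub_le_tvDist A B (measurable_prodMk_left hs)

lemma tvDist_prod_le (P Q : Measure α) (A B : Measure β) [IsProbabilityMeasure P]
    [IsProbabilityMeasure Q] [IsProbabilityMeasure A] [IsProbabilityMeasure B] :
    tvDist (P.prod A) (Q.prod B) ≤ tvDist P Q + tvDist A B := by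
  have swapped : tvDist (P.prod B) (Q.prod B) ≤ tvDist P Q := by
    rw [← Measure.prod_swap (μ := B), ← Measure.prod_swap (μ := B)]
    exact (tvDist_map_le _ _ measurable_swap).trans (tvDist_prod_right_le B P Q)
  linarith [tvDist_triangle (P.prod A) (P.prod B) (Q.prod B), tvDist_prod_right_le P A B]

end Mixture

section Pi

variable {α : Type*} [MeasurableSpace α]

lemma pi_eq_map_prod_succ {n : ℕ} (F : Fin (n + 1) → Measure α) [∀ i, SigmaFinite (F i)] :
    Measure.pi F = ((F 0).prod (Measure.pi fun j : Fin n => F j.succ)).map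
      (MeasurableEquiv.piFinSuccAbove (fun _ => α) 0).symm := by
  simpa only [Fin.zero_succAbove] using
    ((measurePreserving_piFinSuccAbove F 0).symm _).map_eq.symm

lemma tvDist_pi_le {n : ℕ} (F G : Fin n → Measure α) [∀ i, IsProbabilityMeasure (F i)]
    [∀ i, IsProbabilityMeasure (G i)] :
    tvDist (Measure.pi F) (Measure.pi G) ≤ ∑ i, tvDist (F i) (G i) := by
  induction n with
  | zero =>
    rw [Subsingleton.elim F G]
    exact tvDist_le_of_forall fun _ _ => by simp
  | succ n ih =>
    rw [pi_eq_map_prod_succ F, pi_eq_map_prod_succ G, Fin.sum_univ_succ]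
    exact (tvDist_map_le _ _ (MeasurableEquiv.measurable _)).trans <|
      (tvDist_prod_le _ _ _ _).trans (add_le_add_right (ih _ _) _)

lemma smul_pow_pi_le_pi {c : ℝ≥0∞} {n : ℕ} (F G : Fin n → Measure α) [∀ i, SigmaFinite (F i)]
    [∀ i, SigmaFinite (G i)] (h : ∀ i, c • F i ≤ G i) :
    c ^ n • Measure.pi F ≤ Measure.pi G := by
  induction n with
  | zero => simp [Subsingleton.elim F G]
  | succ n ih =>
    rw [pi_eq_map_prod_succ F, pi_eq_map_prod_succ G, ← Measure.map_smul, pow_succ', ← smul_smul,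
      ← Measure.prod_smul_right, ← Measure.prod_smul_left]
    exact Measure.map_mono (Measure.prod_mono (h 0) (ih _ _ fun j => h j.succ))
      (MeasurableEquiv.measurable _)

end Pi

lemma hasSum_poisson_mul_natCast (r : ℝ≥0) :
    HasSum (fun k : ℕ => Real.exp (-r) * r ^ k / k.factorial * k) r := by
  have shift : (fun k : ℕ => Real.exp (-r) * r ^ (k + 1) / (k + 1).factorial * ((k + 1 : ℕ) : ℝ))
      = fun k => r * (Real.exp (-r) * r ^ k / k.factorial) := by
    funext k
    rw [Nat.factorial_succ, pow_succ]
    push_cast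
    field_simp
  refine (hasSum_nat_add_iff' 1).1 ?_
  rw [shift]
  simpa using (hasSum_one_poissonMeasure r).mul_left (r : ℝ)

lemma smul_poissonMeasure_le {r s : ℝ≥0} (hrs : r ≤ s) :
    ENNReal.ofReal (Real.exp (-(s - r : ℝ))) • poissonMeasure r ≤ poissonMeasure s := by
  refine Measure.le_iff.2 fun t ht => ?_
  rw [Measure.smul_apply, poissonMeasure, poissonMeasure, Measure.sum_apply _ ht,
    Measure.sum_apply _ ht, smul_eq_mul, ← ENNReal.tsum_mul_left]
  refine ENNReal.tsum_le_tsum fun k => ?_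
  simp only [Measure.smul_apply, smul_eq_mul, ← mul_assoc]
  gcongr
  rw [← ENNReal.ofReal_mul (Real.exp_nonneg _)]
  refine ENNReal.ofReal_le_ofReal ?_
  calc Real.exp (-(s - r : ℝ)) * (Real.exp (-r) * r ^ k / k.factorial)
      = Real.exp (-s) * r ^ k / k.factorial := by
        rw [← mul_div_assoc, ← mul_assoc, ← Real.exp_add]
        ring_nf
    _ ≤ Real.exp (-s) * s ^ k / k.factorial := by gcongr

section CompoundPoisson

variable {E : Type*} [AddCommMonoid E] [MeasurableSpace E]

noncomputable def iidSumLaw (F : Measure E) (k : ℕ) : Measure E :=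
  (Measure.pi fun _ : Fin k => F).map fun x => ∑ i, x i

noncomputable def compoundPoisson (r : ℝ≥0) (F : Measure E) : Measure E :=
  (poissonMeasure r).bind (iidSumLaw F)

lemma smul_compoundPoisson_le {r s : ℝ≥0} (hrs : r ≤ s) (F : Measure E) :
    ENNReal.ofReal (Real.exp (-(s - r : ℝ))) • compoundPoisson r F ≤ compoundPoisson s F := by
  refine Measure.le_iff.2 fun t ht => ?_
  rw [compoundPoisson, compoundPoisson, ← Measure.bind_smul,
    Measure.bind_apply ht Measurable.of_discrete.aemeasurable,
    Measure.bind_apply ht Measurable.of_discrete.aemeasurable]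
  exact lintegral_mono' (smul_poissonMeasure_le hrs) le_rfl

variable [MeasurableAdd₂ E]

instance (F : Measure E) [IsProbabilityMeasure F] (k : ℕ) :
    IsProbabilityMeasure (iidSumLaw F k) :=
  Measure.isProbabilityMeasure_map (by fun_prop)

instance (r : ℝ≥0) (F : Measure E) [IsProbabilityMeasure F] :
    IsProbabilityMeasure (compoundPoisson r F) :=
  isProbabilityMeasure_bind (Measurable.of_discrete).aemeasurable (ae_of_all _ inferInstance)

lemma tvDist_iidSumLaw_le (F G : Measure E) [IsProbabilityMeasure F] [IsProbabilityMeasure G]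
    (k : ℕ) : tvDist (iidSumLaw F k) (iidSumLaw G k) ≤ k * tvDist F G :=
  (tvDist_map_le _ _ (by fun_prop)).trans <| (tvDist_pi_le _ _).trans_eq (by simp)

lemma tvDist_compoundPoisson_le (r : ℝ≥0) (F G : Measure E) [IsProbabilityMeasure F]
    [IsProbabilityMeasure G] :
    tvDist (compoundPoisson r F) (compoundPoisson r G) ≤ r * tvDist F G := by
  have hmean := (hasSum_poisson_mul_natCast r).mul_right (tvDist F G)
  have hb : Integrable (fun k : ℕ => k * tvDist F G) (poissonMeasure r) := by
    rw [integrable_poissonMeasure_iff]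
    refine hmean.summable.congr fun k => ?_
    rw [Real.norm_of_nonneg (by have := tvDist_nonneg F G; positivity)]
    ring
  refine (tvDist_bind_le Measurable.of_discrete Measurable.of_discrete hb
    (tvDist_iidSumLaw_le F G)).trans_eq ?_
  rw [integral_poissonMeasure, ← hmean.tsum_eq]
  simp only [smul_eq_mul, mul_assoc]

lemma tvDist_pi_compoundPoisson_le_of_le {r s : ℝ≥0} (hrs : r ≤ s) (F G : Measure E)
    [IsProbabilityMeasure F] [IsProbabilityMeasure G] (n : ℕ) :
    tvDist (Measure.pi fun _ : Fin n => compoundPoisson r F)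
        (Measure.pi fun _ : Fin n => compoundPoisson s G)
      ≤ n * r * tvDist F G + (1 - Real.exp (-(n * (s - r : ℝ)))) := by
  have same_rate : tvDist (Measure.pi fun _ : Fin n => compoundPoisson r F)
      (Measure.pi fun _ : Fin n => compoundPoisson r G) ≤ n * r * tvDist F G := by
    refine (tvDist_pi_le _ _).trans ?_
    simpa [mul_assoc] using
      mul_le_mul_of_nonneg_left (tvDist_compoundPoisson_le r F G) (Nat.cast_nonneg n)
  have same_jumps : tvDist (Measure.pi fun _ : Fin n => compoundPoisson r G)
      (Measure.pi fun _ : Fin n => compoundPoisson s G) ≤ 1 - Real.exp (-(n * (s - r : ℝ))) := by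
    refine tvDist_le_one_sub_of_smul_le (Real.exp_nonneg _) ?_
    have := smul_pow_pi_le_pi _ _ fun _ : Fin n => smul_compoundPoisson_le hrs G
    rwa [← ENNReal.ofReal_pow (Real.exp_nonneg _), ← Real.exp_nat_mul, mul_neg] at this
  linarith [tvDist_triangle (Measure.pi fun _ : Fin n => compoundPoisson r F)
    (Measure.pi fun _ : Fin n => compoundPoisson r G)
    (Measure.pi fun _ : Fin n => compoundPoisson s G)]

lemma tvDist_pi_compoundPoisson_le (r s : ℝ≥0) (F G : Measure E)
    [IsProbabilityMeasure F] [IsProbabilityMeasure G] (n : ℕ) :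
    tvDist (Measure.pi fun _ : Fin n => compoundPoisson r F)
        (Measure.pi fun _ : Fin n => compoundPoisson s G)
      ≤ n * min (r : ℝ) s * tvDist F G + (1 - Real.exp (-(n * |(r : ℝ) - s|))) := by
  rcases le_total r s with hrs | hsr
  · have hrs' : (r : ℝ) ≤ s := hrs
    rw [min_eq_left hrs', abs_sub_comm, abs_of_nonneg (sub_nonneg.2 hrs')]
    exact tvDist_pi_compoundPoisson_le_of_le hrs F G n
  · have hsr' : (s : ℝ) ≤ r := hsr
    rw [min_eq_right hsr', abs_of_nonneg (sub_nonneg.2 hsr'), tvDist_comm, tvDist_comm F]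
    exact tvDist_pi_compoundPoisson_le_of_le hsr G F n

end CompoundPoisson

lemma MeasureTheory.Measure.map_prod_eq_bind {α β γ : Type*} [MeasurableSpace α]
    [MeasurableSpace β] [MeasurableSpace γ] (ν : Measure α) (L : Measure β) [SFinite L]
    {g : α × β → γ} (hg : Measurable g) :
    (ν.prod L).map g = ν.bind fun a => L.map fun b => g (a, b) := by
  have map_apply_section (a : α) {s : Set γ} (hs : MeasurableSet s) :
      (L.map fun b => g (a, b)) s = L (Prod.mk a ⁻¹' (g ⁻¹' s)) :=
    Measure.map_apply (hg.comp measurable_prodMk_left) hs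
  have hmap : Measurable fun a => L.map fun b => g (a, b) :=
    Measure.measurable_of_measurable_coe _ fun s hs => by
      simpa only [map_apply_section _ hs] using measurable_measure_prodMk_left (hg hs)
  ext s hs
  rw [Measure.map_apply hg hs, Measure.prod_apply (hg hs), Measure.bind_apply hs hmap.aemeasurable]
  simp only [map_apply_section _ hs]

lemma hasLaw_poissonMeasure {Ω : Type*} [MeasurableSpace Ω] {μ : Measure Ω} {N : Ω → ℕ}
    (hNm : Measurable N) {r : ℝ≥0}
    (hN : ∀ k : ℕ, μ {ω | N ω = k} = ENNReal.ofReal (Real.exp (-r) * r ^ k / k.factorial)) :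
    HasLaw N (poissonMeasure r) μ :=
  ⟨hNm.aemeasurable, Measure.ext_of_singleton fun k => by
    rw [Measure.map_apply hNm (measurableSet_singleton k), poissonMeasure_singleton]
    exact hN k⟩

section RandomSum

variable {Ω E : Type*} [MeasurableSpace Ω] [AddCommMonoid E] [MeasurableSpace E]
  [MeasurableAdd₂ E] {μ : Measure Ω} [IsProbabilityMeasure μ] {X : ℕ → Ω → E}

lemma map_sum_range_eq_iidSumLaw (hXm : ∀ i, Measurable (X i)) (hXiid : iIndepFun X μ)
    (hXid : ∀ i, IdentDistrib (X i) (X 0) μ μ) (k : ℕ) :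
    μ.map (fun ω => ∑ i ∈ Finset.range k, X i ω) = iidSumLaw (μ.map (X 0)) k := by
  have joint : μ.map (fun ω (i : Fin k) => X i ω) = Measure.pi fun _ => μ.map (X 0) := by
    rw [(iIndepFun_iff_map_fun_eq_pi_map (f := fun i : Fin k => X i)
      fun i => (hXm i).aemeasurable).1 (hXiid.precomp Fin.val_injective)]
    exact congrArg Measure.pi (funext fun i => (hXid i).map_eq)
  rw [iidSumLaw, ← joint, Measure.map_map (by fun_prop) (by fun_prop)]
  congr with ω : 1
  exact (Fin.sum_univ_eq_sum_range (fun i => X i ω) k).symm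

lemma map_randomSum_eq_compoundPoisson {N : Ω → ℕ} {r : ℝ≥0}
    (hXm : ∀ i, Measurable (X i)) (hXiid : iIndepFun X μ)
    (hXid : ∀ i, IdentDistrib (X i) (X 0) μ μ) (hN : HasLaw N (poissonMeasure r) μ)
    (hNX : IndepFun N (fun ω i => X i ω) μ) :
    μ.map (fun ω => ∑ i ∈ Finset.range (N ω), X i ω) = compoundPoisson r (μ.map (X 0)) := by
  have hseq : Measurable fun ω i => X i ω := measurable_pi_lambda _ hXm
  have hsum (k : ℕ) : Measurable fun x : ℕ → E => ∑ i ∈ Finset.range k, x i :=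
    Finset.measurable_sum _ fun i _ => measurable_pi_apply i
  have hg : Measurable fun p : ℕ × (ℕ → E) => ∑ i ∈ Finset.range p.1, p.2 i :=
    measurable_from_prod_countable_right hsum
  rw [show (fun ω => ∑ i ∈ Finset.range (N ω), X i ω)
      = (fun p : ℕ × (ℕ → E) => ∑ i ∈ Finset.range p.1, p.2 i) ∘ fun ω => (N ω, fun i => X i ω)
      from rfl,
    ← AEMeasurable.map_map_of_aemeasurable hg.aemeasurable
      (hN.aemeasurable.prodMk hseq.aemeasurable),
    (indepFun_iff_map_prod_eq_prod_map_map hN.aemeasurable hseq.aemeasurable).1 hNX,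
    hN.map_eq, Measure.map_prod_eq_bind _ _ hg, compoundPoisson]
  congr with k : 1
  rw [Measure.map_map (hsum k) hseq]
  exact map_sum_range_eq_iidSumLaw hXm hXiid hXid k

end RandomSum

theorem stmt8_general {Ω : Type*} [MeasurableSpace Ω] (μ : Measure Ω) [IsProbabilityMeasure μ]
    (X Y : ℕ → Ω → ℝ) (N N' : Ω → ℕ)
    (lamX lamY : ℝ) (hlX : 0 ≤ lamX) (hlY : 0 ≤ lamY)
    (hXm : ∀ i, Measurable (X i)) (hYm : ∀ i, Measurable (Y i))
    (hNm : Measurable N) (hN'm : Measurable N')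
    -- the `X_i` are i.i.d., a.s. nonzero; same for the `Y_i`
    (hXiid : iIndepFun X μ)
    (hXid : ∀ i, IdentDistrib (X i) (X 0) μ μ)
    (hYiid : iIndepFun Y μ)
    (hYid : ∀ i, IdentDistrib (Y i) (Y 0) μ μ)
    -- `N, N'` are Poisson with means `lamX, lamY`
    (hN : ∀ k : ℕ, μ {ω | N ω = k}
      = ENNReal.ofReal (Real.exp (-lamX) * lamX ^ k / k.factorial))
    (hN' : ∀ k : ℕ, μ {ω | N' ω = k}
      = ENNReal.ofReal (Real.exp (-lamY) * lamY ^ k / k.factorial))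
    -- `N` is independent of the sequence `(X_i)`, `N'` of `(Y_i)`
    (hNX : IndepFun N (fun ω => fun i => X i ω) μ)
    (hN'Y : IndepFun N' (fun ω => fun i => Y i ω) μ)
    (n : ℕ) :
    tvDist
        (Measure.pi (fun _ : Fin n =>
          μ.map (fun ω => ∑ i ∈ Finset.range (N ω), X i ω)))
        (Measure.pi (fun _ : Fin n =>
          μ.map (fun ω => ∑ i ∈ Finset.range (N' ω), Y i ω)))
      ≤ n * min lamX lamY * tvDist (μ.map (X 0)) (μ.map (Y 0))
        + (1 - Real.exp (-(n * |lamX - lamY|))) := by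
  have := Measure.isProbabilityMeasure_map (μ := μ) (hXm 0).aemeasurable
  have := Measure.isProbabilityMeasure_map (μ := μ) (hYm 0).aemeasurable
  rw [map_randomSum_eq_compoundPoisson hXm hXiid hXid
      (hasLaw_poissonMeasure (r := ⟨lamX, hlX⟩) hNm hN) hNX,
    map_randomSum_eq_compoundPoisson hYm hYiid hYid
      (hasLaw_poissonMeasure (r := ⟨lamY, hlY⟩) hN'm hN') hN'Y]
  exact tvDist_pi_compoundPoisson_le _ _ _ _ n

theorem stmt8 {Ω : Type*} [MeasurableSpace Ω] (μ : Measure Ω) [IsProbabilityMeasure μ]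
    (X Y : ℕ → Ω → ℝ) (N N' : Ω → ℕ)
    (lamX lamY : ℝ) (hlX : 0 ≤ lamX) (hlY : 0 ≤ lamY)
    (hXm : ∀ i, Measurable (X i)) (hYm : ∀ i, Measurable (Y i))
    (hNm : Measurable N) (hN'm : Measurable N')
    -- the `X_i` are i.i.d., a.s. nonzero; same for the `Y_i`
    (hXiid : iIndepFun X μ)
    (hXid : ∀ i, IdentDistrib (X i) (X 0) μ μ)
    (hYiid : iIndepFun Y μ)
    (hYid : ∀ i, IdentDistrib (Y i) (Y 0) μ μ)
    (hXne : ∀ i, ∀ᵐ ω ∂μ, X i ω ≠ 0)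
    (hYne : ∀ i, ∀ᵐ ω ∂μ, Y i ω ≠ 0)
    -- `N, N'` are Poisson with means `lamX, lamY`
    (hN : ∀ k : ℕ, μ {ω | N ω = k}
      = ENNReal.ofReal (Real.exp (-lamX) * lamX ^ k / k.factorial))
    (hN' : ∀ k : ℕ, μ {ω | N' ω = k}
      = ENNReal.ofReal (Real.exp (-lamY) * lamY ^ k / k.factorial))
    -- `N` is independent of the sequence `(X_i)`, `N'` of `(Y_i)`
    (hNX : IndepFun N (fun ω => fun i => X i ω) μ)
    (hN'Y : IndepFun N' (fun ω => fun i => Y i ω) μ)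
    (n : ℕ) (hn : 1 ≤ n) :
    tvDist
        (Measure.pi (fun _ : Fin n =>
          μ.map (fun ω => ∑ i ∈ Finset.range (N ω), X i ω)))
        (Measure.pi (fun _ : Fin n =>
          μ.map (fun ω => ∑ i ∈ Finset.range (N' ω), Y i ω)))
      ≤ n * min lamX lamY * tvDist (μ.map (X 0)) (μ.map (Y 0))
        + (1 - Real.exp (-(n * |lamX - lamY|))) :=
  stmt8_general μ X Y N N' lamX lamY hlX hlY hXm hYm hNm hN'm hXiid hXid hYiid hYid hN hN' hNX hN'Y
    n
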